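/- For all types σ, τ ∈ 𝕋 on which the translation ⟦·⟧ is defined (i.e. σ and τ contain neither the record-merge type constructor + nor labels outside 𝓛): σ = τ in 𝕋 (mutual subtyping with respect to the subtyping of 𝕋) if and only if ⟦σ⟧ = ⟦τ⟧ in 𝕋_C (mutual subtyping with respect to the subtyping of 𝕋_C). -/

import Mathlib

/-- Intersection and record types `𝕋`. Record types are the types satisfying `IsRec`. -/
inductive Ty where
  | const : Nat → Ty
  | omega : Ty
  | arrow : Ty → Ty → Ty
  | inter : Ty → Ty → Ty
  | empty : Ty
  | fld : Nat → Ty → Ty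
  | merge : Ty → Ty → Ty
deriving DecidableEq

/-- The record types `𝕋_R ⊆ 𝕋`. -/
inductive IsRec : Ty → Prop where
  | empty : IsRec .empty
  | fld (l : Nat) (σ : Ty) : IsRec (.fld l σ)
  | merge {ρ₁ ρ₂ : Ty} : IsRec ρ₁ → IsRec ρ₂ → IsRec (.merge ρ₁ ρ₂)
  | inter {ρ₁ ρ₂ : Ty} : IsRec ρ₁ → IsRec ρ₂ → IsRec (.inter ρ₁ ρ₂)

/-- Subtyping on `𝕋`: the least preorder satisfying the BCD axioms together with
the record and record-merge axioms. -/
inductive TySub : Ty → Ty → Prop where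
  | refl (σ : Ty) : TySub σ σ
  | trans {σ τ υ : Ty} : TySub σ τ → TySub τ υ → TySub σ υ
  | le_omega (σ : Ty) : TySub σ .omega
  | omega_arrow : TySub .omega (.arrow .omega .omega)
  | inter_left (σ τ : Ty) : TySub (.inter σ τ) σ
  | inter_right (σ τ : Ty) : TySub (.inter σ τ) τ
  | le_inter {σ τ₁ τ₂ : Ty} : TySub σ τ₁ → TySub σ τ₂ → TySub σ (.inter τ₁ τ₂)
  | arrow_inter (σ τ₁ τ₂ : Ty) :
      TySub (.inter (.arrow σ τ₁) (.arrow σ τ₂)) (.arrow σ (.inter τ₁ τ₂))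
  | arrow_mono {σ₁ σ₂ τ₁ τ₂ : Ty} : TySub σ₂ σ₁ → TySub τ₁ τ₂ →
      TySub (.arrow σ₁ τ₁) (.arrow σ₂ τ₂)
  | fld_empty (l : Nat) (σ : Ty) : TySub (.fld l σ) .empty
  | fld_inter (l : Nat) (σ τ : Ty) :
      TySub (.inter (.fld l σ) (.fld l τ)) (.fld l (.inter σ τ))
  | fld_mono {σ τ : Ty} (l : Nat) : TySub σ τ → TySub (.fld l σ) (.fld l τ)
  | merge_empty_r {ρ : Ty} : IsRec ρ → TySub (.merge ρ .empty) ρ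
  | merge_empty_r' {ρ : Ty} : IsRec ρ → TySub ρ (.merge ρ .empty)
  | merge_empty_l {ρ : Ty} : IsRec ρ → TySub (.merge .empty ρ) ρ
  | merge_empty_l' {ρ : Ty} : IsRec ρ → TySub ρ (.merge .empty ρ)
  | merge_assoc {ρ₁ ρ₂ ρ₃ : Ty} : IsRec ρ₁ → IsRec ρ₂ → IsRec ρ₃ →
      TySub (.merge (.merge ρ₁ ρ₂) ρ₃) (.merge ρ₁ (.merge ρ₂ ρ₃))
  | merge_assoc' {ρ₁ ρ₂ ρ₃ : Ty} : IsRec ρ₁ → IsRec ρ₂ → IsRec ρ₃ →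
      TySub (.merge ρ₁ (.merge ρ₂ ρ₃)) (.merge (.merge ρ₁ ρ₂) ρ₃)
  | merge_inter {ρ₁ ρ₂ ρ₃ : Ty} : IsRec ρ₁ → IsRec ρ₂ → IsRec ρ₃ →
      TySub (.merge (.inter ρ₁ ρ₂) ρ₃) (.inter (.merge ρ₁ ρ₃) (.merge ρ₂ ρ₃))
  | merge_inter' {ρ₁ ρ₂ ρ₃ : Ty} : IsRec ρ₁ → IsRec ρ₂ → IsRec ρ₃ →
      TySub (.inter (.merge ρ₁ ρ₃) (.merge ρ₂ ρ₃)) (.merge (.inter ρ₁ ρ₂) ρ₃)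
  | fld_absorb {ρ : Ty} (l : Nat) (σ τ : Ty) : IsRec ρ →
      TySub (.merge (.fld l σ) (.inter (.fld l τ) ρ)) (.inter (.fld l τ) ρ)
  | fld_absorb' {ρ : Ty} (l : Nat) (σ τ : Ty) : IsRec ρ →
      TySub (.inter (.fld l τ) ρ) (.merge (.fld l σ) (.inter (.fld l τ) ρ))
  | fld_comm {ρ : Ty} {l l' : Nat} (σ τ : Ty) : l ≠ l' → IsRec ρ →
      TySub (.merge (.fld l σ) (.inter (.fld l' τ) ρ))
          (.inter (.fld l' τ) (.merge (.fld l σ) ρ))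
  | fld_comm' {ρ : Ty} {l l' : Nat} (σ τ : Ty) : l ≠ l' → IsRec ρ →
      TySub (.inter (.fld l' τ) (.merge (.fld l σ) ρ))
          (.merge (.fld l σ) (.inter (.fld l' τ) ρ))
  | merge_mono_l {ρ₁ ρ₂ ρ : Ty} : IsRec ρ₁ → IsRec ρ₂ → IsRec ρ →
      TySub ρ₁ ρ₂ → TySub (.merge ρ₁ ρ) (.merge ρ₂ ρ)
  | merge_congr_r {ρ ρ₁ ρ₂ : Ty} : IsRec ρ → IsRec ρ₁ → IsRec ρ₂ →
      TySub ρ₁ ρ₂ → TySub ρ₂ ρ₁ → TySub (.merge ρ ρ₁) (.merge ρ ρ₂)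

/-- Type equality: mutual subtyping. -/
def TyEq (σ τ : Ty) : Prop := TySub σ τ ∧ TySub τ σ
/-- Intersection types with constructors `𝕋_C`: constants, type variables, `ω`,
arrows, intersections and unary constructors (constructor names in `Option ℕ`: `none` is the distinguished record constructor `⟨⟨·⟩⟩` and `some l` is the label constructor `l(·)` for a label `l`). -/
inductive TyC where
  | const : Nat → TyC
  | tvar : Nat → TyC
  | omega : TyC
  | arrow : TyC → TyC → TyC
  | inter : TyC → TyC → TyC
  | ctor : Option Nat → TyC → TyC
deriving DecidableEq

/-- Subtyping on `𝕋_C`: the least preorder with the BCD axioms together with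
covariance of constructors and distribution of constructors over intersection. -/
inductive SubC : TyC → TyC → Prop where
  | refl (σ : TyC) : SubC σ σ
  | trans {σ τ υ : TyC} : SubC σ τ → SubC τ υ → SubC σ υ
  | le_omega (σ : TyC) : SubC σ .omega
  | omega_arrow : SubC .omega (.arrow .omega .omega)
  | inter_left (σ τ : TyC) : SubC (.inter σ τ) σ
  | inter_right (σ τ : TyC) : SubC (.inter σ τ) τ
  | le_inter {σ τ₁ τ₂ : TyC} : SubC σ τ₁ → SubC σ τ₂ → SubC σ (.inter τ₁ τ₂)
  | arrow_inter (σ τ₁ τ₂ : TyC) :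
      SubC (.inter (.arrow σ τ₁) (.arrow σ τ₂)) (.arrow σ (.inter τ₁ τ₂))
  | arrow_mono {σ₁ σ₂ τ₁ τ₂ : TyC} : SubC σ₂ σ₁ → SubC τ₁ τ₂ →
      SubC (.arrow σ₁ τ₁) (.arrow σ₂ τ₂)
  | ctor_mono {τ₁ τ₂ : TyC} (c : Option Nat) : SubC τ₁ τ₂ → SubC (.ctor c τ₁) (.ctor c τ₂)
  | ctor_inter (c : Option Nat) (τ₁ τ₂ : TyC) :
      SubC (.inter (.ctor c τ₁) (.ctor c τ₂)) (.ctor c (.inter τ₁ τ₂))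

/-- Type equality on `𝕋_C`: mutual subtyping. -/
def TyCEq (σ τ : TyC) : Prop := SubC σ τ ∧ SubC τ σ

/-- Finite intersection of a list of `𝕋_C` types (`ω` for the empty list). -/
def interListC : List TyC → TyC
  | [] => .omega
  | [π] => π
  | π :: π' :: rest => .inter π (interListC (π' :: rest))
/-- The partial translation `⟦·⟧ : 𝕋 → 𝕋_C` relative to the finite label set `𝓛`:
defined homomorphically on constants, `ω`, arrows and intersections, with
`⟦⟨l:τ⟩⟧ = ⟨⟨l(⟦τ⟧)⟩⟩` for `l ∈ 𝓛` and `⟦⟨⟩⟧ = ⟨⟨ω⟩⟩`; undefined (`none`) on types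
containing the record-merge type constructor `+` or a label outside `𝓛`. -/
def interp (L : Finset Nat) : Ty → Option TyC
  | .const a => some (.const a)
  | .omega => some .omega
  | .arrow σ τ => do
      let s ← interp L σ
      let t ← interp L τ
      pure (.arrow s t)
  | .inter σ τ => do
      let s ← interp L σ
      let t ← interp L τ
      pure (.inter s t)
  | .empty => some (.ctor none .omega)
  | .fld l σ =>
      if l ∈ L then (interp L σ).map (fun t => .ctor none (.ctor (some l) t))
      else none
  | .merge _ _ => none

/-!
The direction `σ = τ ⇒ ⟦σ⟧ = ⟦τ⟧` is proved for a total extension of `⟦·⟧` to merges: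
`ρ₁ + ρ₂` goes to `⟦ρ₂⟧ ∩ ⟦ρ₁⟧`, where the fields of `ρ₁` whose label occurs in `ρ₂` are
masked to `⟨⟨ω⟩⟩`. Since the congruence `ρ₁ ≤ ρ₂ ⇒ ρ₁ + ρ ≤ ρ₂ + ρ` compares masked
translations, the set of masked labels is a parameter of the translation, and every rule of `𝕋`
is checked for every mask.

For the converse, `𝕋_C` is mapped back to `𝕋` by sending `⟨⟨τ⟩⟩` to the intersection of the
fields `⟨l:τₗ⟩` for the components `l(τₗ)` of `τ`, and to `⟨⟩` where there are none. This map
sends each rule of `𝕋_C` to a derivable subtyping and is a left inverse of `⟦·⟧`.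
-/

namespace TyCEq

theorem inter_assoc (x y z : TyC) :
    TyCEq (.inter (.inter x y) z) (.inter x (.inter y z)) :=
  ⟨.le_inter (.trans (.inter_left _ _) (.inter_left _ _))
      (.le_inter (.trans (.inter_left _ _) (.inter_right _ _)) (.inter_right _ _)),
    .le_inter (.le_inter (.inter_left _ _) (.trans (.inter_right _ _) (.inter_left _ _)))
      (.trans (.inter_right _ _) (.inter_right _ _))⟩

theorem inter_inter_distrib_left (x y z : TyC) :
    TyCEq (.inter x (.inter y z)) (.inter (.inter x y) (.inter x z)) :=
  ⟨.le_inter (.le_inter (.inter_left _ _) (.trans (.inter_right _ _) (.inter_left _ _)))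
      (.le_inter (.inter_left _ _) (.trans (.inter_right _ _) (.inter_right _ _))),
    .le_inter (.trans (.inter_left _ _) (.inter_left _ _))
      (.le_inter (.trans (.inter_left _ _) (.inter_right _ _))
        (.trans (.inter_right _ _) (.inter_right _ _)))⟩

end TyCEq

theorem SubC.inter_mono {a a' b b' : TyC} (ha : SubC a a') (hb : SubC b b') :
    SubC (.inter a b) (.inter a' b') :=
  .le_inter (.trans (.inter_left _ _) ha) (.trans (.inter_right _ _) hb)

namespace Ty

def labels : Ty → Finset Nat
  | .inter ρ₁ ρ₂ => ρ₁.labels ∪ ρ₂.labels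
  | .merge ρ₁ ρ₂ => ρ₁.labels ∪ ρ₂.labels
  | .fld l _ => {l}
  | _ => ∅

/-- The translation extended to merges, with the top-level fields whose label lies in `S`
masked to `⟨⟨ω⟩⟩`. -/
def transl (S : Finset Nat) : Ty → TyC
  | .const a => .const a
  | .omega => .omega
  | .arrow σ τ => .arrow (σ.transl ∅) (τ.transl ∅)
  | .inter σ τ => .inter (σ.transl S) (τ.transl S)
  | .empty => .ctor none .omega
  | .fld l σ => if l ∈ S then .ctor none .omega else .ctor none (.ctor (some l) (σ.transl ∅))
  | .merge ρ₁ ρ₂ => .inter (ρ₂.transl S) (ρ₁.transl (ρ₂.labels ∪ S))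

theorem transl_fld_congr {S S' : Finset Nat} (l : Nat) (σ : Ty) (h : l ∈ S ↔ l ∈ S') :
    (fld l σ).transl S = (fld l σ).transl S' := by
  simp only [transl, h]

theorem transl_fld_of_mem {S : Finset Nat} {l : Nat} (σ : Ty) (h : l ∈ S) :
    (fld l σ).transl S = empty.transl S := by
  simp only [transl, if_pos h]

theorem transl_fld_le_empty (S : Finset Nat) (l : Nat) (σ : Ty) :
    SubC ((fld l σ).transl S) (empty.transl S) := by
  simp only [transl]
  split_ifs
  · exact .refl _
  · exact .ctor_mono none (.le_omega _)

end Ty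

open Ty

theorem IsRec.transl_le_empty {ρ : Ty} (h : IsRec ρ) (S : Finset Nat) :
    SubC (ρ.transl S) (Ty.empty.transl S) := by
  induction h generalizing S with
  | empty => exact .refl _
  | fld l σ => exact transl_fld_le_empty S l σ
  | merge _ _ _ ih₂ => exact .trans (.inter_left _ _) (ih₂ S)
  | inter _ _ ih₁ _ => exact .trans (.inter_left _ _) (ih₁ S)

theorem TySub.labels_subset {σ τ : Ty} (h : TySub σ τ) : τ.labels ⊆ σ.labels := by
  induction h with
  | refl => exact subset_rfl
  | trans _ _ ih₁ ih₂ => exact ih₂.trans ih₁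
  | le_inter _ _ ih₁ ih₂ => exact Finset.union_subset ih₁ ih₂
  | merge_mono_l _ _ _ _ ih => exact Finset.union_subset_union_left ih
  | merge_congr_r _ _ _ _ _ ih => exact Finset.union_subset_union_right ih
  | _ =>
    intro x
    simp only [labels, Finset.mem_union, Finset.mem_singleton]
    tauto

theorem TySub.transl {σ τ : Ty} (h : TySub σ τ) (S : Finset Nat) :
    SubC (σ.transl S) (τ.transl S) := by
  induction h generalizing S with
  | refl => exact .refl _
  | trans _ _ ih₁ ih₂ => exact .trans (ih₁ S) (ih₂ S)
  | le_omega => exact .le_omega _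
  | omega_arrow => exact .omega_arrow
  | inter_left => exact .inter_left _ _
  | inter_right => exact .inter_right _ _
  | le_inter _ _ ih₁ ih₂ => exact .le_inter (ih₁ S) (ih₂ S)
  | arrow_inter => exact .arrow_inter _ _ _
  | arrow_mono _ _ ih₁ ih₂ => exact .arrow_mono (ih₁ ∅) (ih₂ ∅)
  | fld_empty l σ => exact transl_fld_le_empty S l σ
  | fld_inter l σ τ =>
    simp only [Ty.transl]
    split_ifs
    · exact .inter_left _ _
    · exact .trans (.ctor_inter none _ _) (.ctor_mono none (.ctor_inter (some l) _ _))
  | fld_mono l _ ih =>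
    simp only [Ty.transl]
    split_ifs
    · exact .refl _
    · exact .ctor_mono none (.ctor_mono (some l) (ih ∅))
  | merge_empty_r _ =>
    simp only [Ty.transl, labels, Finset.empty_union]
    exact .inter_right _ _
  | merge_empty_r' hρ =>
    simp only [Ty.transl, labels, Finset.empty_union]
    exact .le_inter (hρ.transl_le_empty S) (.refl _)
  | merge_empty_l _ => exact .inter_left _ _
  | merge_empty_l' hρ => exact .le_inter (.refl _) (hρ.transl_le_empty _)
  | merge_assoc =>
    simp only [Ty.transl, labels, Finset.union_assoc]
    exact (TyCEq.inter_assoc _ _ _).2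
  | merge_assoc' =>
    simp only [Ty.transl, labels, Finset.union_assoc]
    exact (TyCEq.inter_assoc _ _ _).1
  | merge_inter => exact (TyCEq.inter_inter_distrib_left _ _ _).1
  | merge_inter' => exact (TyCEq.inter_inter_distrib_left _ _ _).2
  | fld_absorb => exact .inter_left _ _
  | fld_absorb' l σ τ _ =>
    rw [Ty.transl.eq_7, transl_fld_of_mem σ (by simp [labels])]
    exact .le_inter (.refl _) (.trans (.inter_left _ _) (transl_fld_le_empty _ l τ))
  | @fld_comm ρ l l' σ τ hne _ =>
    -- the mask `{l'} ∪ ρ.labels` of `⟨l:σ⟩` may drop `l'`, as `l ≠ l'`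
    rw [Ty.transl.eq_7, transl_fld_congr l σ (S' := ρ.labels ∪ S) (by simp [labels, hne])]
    exact (TyCEq.inter_assoc _ _ _).1
  | @fld_comm' ρ l l' σ τ hne _ =>
    rw [Ty.transl.eq_7, transl_fld_congr l σ (S' := ρ.labels ∪ S) (by simp [labels, hne])]
    exact (TyCEq.inter_assoc _ _ _).2
  | merge_mono_l _ _ _ _ ih => exact SubC.inter_mono (.refl _) (ih _)
  | merge_congr_r _ _ _ h₁₂ h₂₁ ih₁₂ =>
    simp only [Ty.transl]
    rw [(h₁₂.labels_subset).antisymm h₂₁.labels_subset]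
    exact SubC.inter_mono (ih₁₂ S) (.refl _)

namespace TyC

mutual

/-- Type variables, which `⟦·⟧` never produces, become constants. -/
def toTy : TyC → Ty
  | .const n => .const n
  | .tvar n => .const n
  | .omega => .omega
  | .arrow a b => .arrow a.toTy b.toTy
  | .inter a b => .inter a.toTy b.toTy
  | .ctor (some l) t => .fld l t.toTy
  | .ctor none t => t.recordToTy

def recordToTy : TyC → Ty
  | .inter a b => .inter a.recordToTy b.recordToTy
  | .ctor (some l) t => .fld l t.toTy
  | _ => .empty

end

theorem recordToTy_le_empty (a : TyC) : TySub a.recordToTy .empty := by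
  induction a with
  | inter _ _ ih _ => exact .trans (.inter_left _ _) ih
  | ctor c =>
    cases c
    · exact .refl _
    · exact .fld_empty _ _
  | _ => exact .refl _

end TyC

theorem SubC.toTy {a b : TyC} (h : SubC a b) :
    TySub a.toTy b.toTy ∧ TySub a.recordToTy b.recordToTy := by
  induction h with
  | refl => exact ⟨.refl _, .refl _⟩
  | trans _ _ ih₁ ih₂ => exact ⟨ih₁.1.trans ih₂.1, ih₁.2.trans ih₂.2⟩
  | le_omega a => exact ⟨.le_omega _, a.recordToTy_le_empty⟩
  | omega_arrow => exact ⟨.omega_arrow, .refl _⟩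
  | inter_left => exact ⟨.inter_left _ _, .inter_left _ _⟩
  | inter_right => exact ⟨.inter_right _ _, .inter_right _ _⟩
  | le_inter _ _ ih₁ ih₂ => exact ⟨.le_inter ih₁.1 ih₂.1, .le_inter ih₁.2 ih₂.2⟩
  | arrow_inter => exact ⟨.arrow_inter _ _ _, .inter_left _ _⟩
  | arrow_mono _ _ ih₁ ih₂ => exact ⟨.arrow_mono ih₁.1 ih₂.1, .refl _⟩
  | ctor_mono c _ ih =>
    cases c
    · exact ⟨ih.2, .refl _⟩
    · exact ⟨.fld_mono _ ih.1, .fld_mono _ ih.1⟩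
  | ctor_inter c =>
    cases c
    · exact ⟨.refl _, .inter_left _ _⟩
    · exact ⟨.fld_inter _ _ _, .fld_inter _ _ _⟩

theorem transl_empty_eq_and_toTy_eq_of_interp_eq_some {L : Finset Nat} {σ : Ty} {σ' : TyC}
    (h : interp L σ = some σ') : σ.transl ∅ = σ' ∧ σ'.toTy = σ := by
  induction σ generalizing σ' with
  | arrow σ τ ihσ ihτ | inter σ τ ihσ ihτ =>
    simp only [interp, bind, Option.bind_eq_some_iff, pure, Option.some.injEq] at h
    obtain ⟨s, hs, t, ht, rfl⟩ := h
    simp [Ty.transl, TyC.toTy, (ihσ hs).1, (ihσ hs).2, (ihτ ht).1, (ihτ ht).2]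
  | fld l σ ih =>
    simp only [interp] at h
    split_ifs at h
    obtain ⟨s, hs, rfl⟩ := Option.map_eq_some_iff.mp h
    simp [Ty.transl, TyC.toTy, TyC.recordToTy, (ih hs).1, (ih hs).2]
  | merge => simp [interp] at h
  | _ =>
    simp only [interp, Option.some.injEq] at h
    subst h
    exact ⟨rfl, rfl⟩

/-- For types `σ, τ ∈ 𝕋` on which the translation `⟦·⟧` is defined:
`σ = τ` in `𝕋` iff `⟦σ⟧ = ⟦τ⟧` in `𝕋_C` (mutual subtyping on either side). -/
theorem interp_preserves_eq (L : Finset Nat) (σ τ : Ty) (σ' τ' : TyC)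
    (hσ : interp L σ = some σ') (hτ : interp L τ = some τ') :
    TyEq σ τ ↔ TyCEq σ' τ' := by
  obtain ⟨hσ_transl, hσ_toTy⟩ := transl_empty_eq_and_toTy_eq_of_interp_eq_some hσ
  obtain ⟨hτ_transl, hτ_toTy⟩ := transl_empty_eq_and_toTy_eq_of_interp_eq_some hτ
  constructor
  · rintro ⟨hστ, hτσ⟩
    rw [← hσ_transl, ← hτ_transl]
    exact ⟨hστ.transl ∅, hτσ.transl ∅⟩
  · rintro ⟨hστ, hτσ⟩
    rw [← hσ_toTy, ← hτ_toTy]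
    exact ⟨hστ.toTy.1, hτσ.toTy.1⟩
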